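/- arXiv:2211.02331 — 3 statements merged into one kernel-verified Lean document; each statement's English description precedes it below -/
import Mathlib

section
/- Let S, m, x be nonzero reals satisfying p1(S,m,x) = 0 where p1(S,m,x) = S^4 - 2S^2 x m + x^2 m^2 - 2S^3 + 2S^2 x - 2S x m + 2x^2 m + S^2 - 2S x + x^2, and let z := (x(m+1) - S(S+1))/(2S). Then m·x = (x + z^2 + z)^2. -/
/-!
With `q := x(m+1) + S² - S`, the polynomial `p1` is `q² - (2S)²·mx`, so `p1 = 0` says that `q/(2S)`
squares to `mx`. Completing the square, `x + z² + z = x - 1/4 + (x(m+1) - S²)²/(4S²)`, and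
substituting `q² = (2S)²·mx` into this expression collapses it to `q/(2S)`.
-/

section
variable {K : Type*} [Field K]

theorem p1_eq_sq_sub_sq_mul (S m x : K) :
    S^4 - 2*S^2*x*m + x^2*m^2 - 2*S^3 + 2*S^2*x - 2*S*x*m + 2*x^2*m + S^2 - 2*S*x + x^2
      = (x*(m+1) + S^2 - S)^2 - (2*S)^2*(m*x) := by
  ring

theorem add_sq_add_eq_div_of_sq_eq [NeZero (2 : K)] {S m x : K} (hS : S ≠ 0)
    (h : (x*(m+1) + S^2 - S)^2 = (2*S)^2*(m*x)) :
    x + ((x*(m+1) - S*(S+1))/(2*S))^2 + (x*(m+1) - S*(S+1))/(2*S)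
      = (x*(m+1) + S^2 - S)/(2*S) := by
  field_simp
  linear_combination h

end

theorem stmt_1_general (S m x : ℝ) (hS : S ≠ 0)
    (hp1 : S^4 - 2*S^2*x*m + x^2*m^2 - 2*S^3 + 2*S^2*x - 2*S*x*m + 2*x^2*m
      + S^2 - 2*S*x + x^2 = 0) :
    m * x = (x + ((x*(m+1) - S*(S+1))/(2*S))^2 + (x*(m+1) - S*(S+1))/(2*S))^2 := by
  have hq : (x*(m+1) + S^2 - S)^2 = (2*S)^2*(m*x) := by
    rw [p1_eq_sq_sub_sq_mul] at hp1
    exact sub_eq_zero.mp hp1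
  rw [add_sq_add_eq_div_of_sq_eq hS hq, div_pow, hq, mul_div_cancel_left₀ _ (by positivity)]

theorem stmt_1 (S m x : ℝ) (hS : S ≠ 0) (hm : m ≠ 0) (hx : x ≠ 0)
    (hp1 : S^4 - 2*S^2*x*m + x^2*m^2 - 2*S^3 + 2*S^2*x - 2*S*x*m + 2*x^2*m
      + S^2 - 2*S*x + x^2 = 0) :
    m * x = (x + ((x*(m+1) - S*(S+1))/(2*S))^2 + (x*(m+1) - S*(S+1))/(2*S))^2 :=
  stmt_1_general S m x hS hp1
end

section
/- If S₀, m₀, x₀, y₀ are nonzero integers with p1(S₀,m₀,x₀) = 0 and S₀·m₀·x₀ ≠ 0, where z₀ := (x₀(m₀+1) - S₀(S₀+1))/(2S₀) is defined as a rational number, then z₀ is an integer. -/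
theorem stmt_2 (S m x y : ℤ) (hS : S ≠ 0) (hm : m ≠ 0) (hx : x ≠ 0) (hy : y ≠ 0)
    (hp1 : S^4 - 2*S^2*x*m + x^2*m^2 - 2*S^3 + 2*S^2*x - 2*S*x*m + 2*x^2*m
      + S^2 - 2*S*x + x^2 = 0)
    (hSmx : S * m * x ≠ 0) :
    ∃ k : ℤ, ((x : ℚ)*(m+1) - S*(S+1))/(2*S) = (k : ℚ) := by
  set q : ℚ := ((x : ℚ)*(m+1) - S*(S+1))/(2*S) with hq
  have hS' : (S : ℚ) ≠ 0 := Int.cast_ne_zero.mpr hS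
  have hq2 : q ^ 2 = ((S - x : ℤ) : ℚ) := by
    have hp1' : (S:ℚ)^4 - 2*S^2*x*m + x^2*m^2 - 2*S^3 + 2*S^2*x - 2*S*x*m + 2*x^2*m
      + S^2 - 2*S*x + x^2 = 0 := by exact_mod_cast congrArg (Int.cast : ℤ → ℚ) hp1
    rw [hq]
    field_simp
    push_cast
    linear_combination hp1'
  have hden : q.den = 1 := by
    have : (q ^ 2).den = 1 := by rw [hq2]; exact Rat.den_intCast _
    have hpow : q.den ^ 2 = 1 := by
      have := Rat.den_pow q 2
      omega
    nlinarith [q.pos, hpow]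
  exact ⟨q.num, by rw [← @Rat.num_div_den q, hden]; simp⟩
end

section
/- In R^9, let X₁ = { -e_i + (1/3)·Σ_{k=1}^9 e_k : 1 ≤ i ≤ 9 } and X₂ = { e_i + e_j : 1 ≤ i < j ≤ 9 }. Then every pairwise distance between two distinct points of X₁ ∪ X₂ equals sqrt(2) or 2; i.e., X₁ ∪ X₂ is a two-distance set with distances sqrt(2) and 2. -/
open scoped RealInnerProductSpace

private lemma norm_eq_sqrt_inner' (x : EuclideanSpace ℝ (Fin 9)) :
    ‖x‖ = Real.sqrt ⟪x, x⟫ := by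
  rw [real_inner_self_eq_norm_mul_norm, Real.sqrt_mul_self (norm_nonneg x)]

private lemma sqrt_eq_two' {a : ℝ} (h : a = 4) : Real.sqrt a = 2 := by
  rw [h, show (4:ℝ) = 2^2 by norm_num, Real.sqrt_sq (by norm_num)]

private lemma inn_ss (i j : Fin 9) :
    ⟪(EuclideanSpace.single i (1:ℝ) : EuclideanSpace ℝ (Fin 9)), EuclideanSpace.single j 1⟫
      = if i = j then 1 else 0 := by
  rcases eq_or_ne i j with rfl | h
  · simp [EuclideanSpace.inner_single_left, EuclideanSpace.single_apply]
  · simp [EuclideanSpace.inner_single_left, EuclideanSpace.single_apply, h, h.symm]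

private lemma inn_sS (i : Fin 9) :
    ⟪(EuclideanSpace.single i (1:ℝ) : EuclideanSpace ℝ (Fin 9)),
      ∑ k : Fin 9, EuclideanSpace.single k 1⟫ = 1 := by
  simp [inner_sum, EuclideanSpace.inner_single_left, EuclideanSpace.single_apply]

private lemma inn_Ss (i : Fin 9) :
    ⟪(∑ k : Fin 9, EuclideanSpace.single k (1:ℝ) : EuclideanSpace ℝ (Fin 9)),
      EuclideanSpace.single i 1⟫ = 1 := by
  rw [real_inner_comm]; exact inn_sS i

private lemma inn_SS :
    ⟪(∑ k : Fin 9, EuclideanSpace.single k (1:ℝ) : EuclideanSpace ℝ (Fin 9)),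
      ∑ k : Fin 9, EuclideanSpace.single k 1⟫ = 9 := by
  simp only [inner_sum, sum_inner, inn_ss]
  simp [Finset.sum_ite_eq]

theorem stmt_15
    (X₁ X₂ : Set (EuclideanSpace ℝ (Fin 9)))
    (hX₁ : X₁ = { p | ∃ i : Fin 9,
      p = -EuclideanSpace.single i 1 + (1/3 : ℝ) • ∑ k : Fin 9, EuclideanSpace.single k 1 })
    (hX₂ : X₂ = { p | ∃ i j : Fin 9, i < j ∧
      p = EuclideanSpace.single i 1 + EuclideanSpace.single j 1 }) :
    (∀ p ∈ X₁ ∪ X₂, ∀ q ∈ X₁ ∪ X₂, p ≠ q →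
      ‖p - q‖ = Real.sqrt 2 ∨ ‖p - q‖ = 2) ∧
    (∃ p ∈ X₁ ∪ X₂, ∃ q ∈ X₁ ∪ X₂, ‖p - q‖ = Real.sqrt 2) ∧
    (∃ p ∈ X₁ ∪ X₂, ∃ q ∈ X₁ ∪ X₂, ‖p - q‖ = 2) := by
  subst hX₁ hX₂
  refine ⟨?_, ?_, ?_⟩
  · rintro p (⟨i, rfl⟩ | ⟨i, j, hij, rfl⟩) q (⟨k, rfl⟩ | ⟨k, l, hkl, rfl⟩) hne
    · -- X₁ X₁
      have hik : i ≠ k := by rintro rfl; exact hne rfl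
      left
      rw [norm_eq_sqrt_inner']
      congr 1
      simp only [inner_sub_left, inner_sub_right, inner_add_left, inner_add_right,
        inner_neg_left, inner_neg_right, real_inner_smul_left, real_inner_smul_right,
        inn_ss, inn_sS, inn_Ss, inn_SS]
      simp [hik, hik.symm]
      norm_num
    · -- X₁ X₂
      rcases eq_or_ne i k with rfl | hik
      · right
        rw [norm_eq_sqrt_inner']
        apply sqrt_eq_two'
        simp only [inner_sub_left, inner_sub_right, inner_add_left, inner_add_right,
          inner_neg_left, inner_neg_right, real_inner_smul_left, real_inner_smul_right,
          inn_ss, inn_sS, inn_Ss, inn_SS]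
        simp [hkl.ne, hkl.ne']
        norm_num
      · rcases eq_or_ne i l with rfl | hil
        · right
          rw [norm_eq_sqrt_inner']
          apply sqrt_eq_two'
          simp only [inner_sub_left, inner_sub_right, inner_add_left, inner_add_right,
            inner_neg_left, inner_neg_right, real_inner_smul_left, real_inner_smul_right,
            inn_ss, inn_sS, inn_Ss, inn_SS]
          simp [hkl.ne, hkl.ne', hik, hik.symm]
          norm_num
        · left
          rw [norm_eq_sqrt_inner']
          congr 1
          simp only [inner_sub_left, inner_sub_right, inner_add_left, inner_add_right,
            inner_neg_left, inner_neg_right, real_inner_smul_left, real_inner_smul_right,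
            inn_ss, inn_sS, inn_Ss, inn_SS]
          simp [hkl.ne, hkl.ne', hik, hik.symm, hil, hil.symm]
          norm_num
    · -- X₂ X₁
      rcases eq_or_ne k i with rfl | hki
      · right
        rw [norm_eq_sqrt_inner']
        apply sqrt_eq_two'
        simp only [inner_sub_left, inner_sub_right, inner_add_left, inner_add_right,
          inner_neg_left, inner_neg_right, real_inner_smul_left, real_inner_smul_right,
          inn_ss, inn_sS, inn_Ss, inn_SS]
        simp [hij.ne, hij.ne']
        norm_num
      · rcases eq_or_ne k j with rfl | hkj
        · right
          rw [norm_eq_sqrt_inner']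
          apply sqrt_eq_two'
          simp only [inner_sub_left, inner_sub_right, inner_add_left, inner_add_right,
            inner_neg_left, inner_neg_right, real_inner_smul_left, real_inner_smul_right,
            inn_ss, inn_sS, inn_Ss, inn_SS]
          simp [hij.ne, hij.ne', hki, hki.symm]
          norm_num
        · left
          rw [norm_eq_sqrt_inner']
          congr 1
          simp only [inner_sub_left, inner_sub_right, inner_add_left, inner_add_right,
            inner_neg_left, inner_neg_right, real_inner_smul_left, real_inner_smul_right,
            inn_ss, inn_sS, inn_Ss, inn_SS]
          simp [hij.ne, hij.ne', hki, hki.symm, hkj, hkj.symm]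
          norm_num
    · -- X₂ X₂
      rcases eq_or_ne i k with rfl | hik
      · rcases eq_or_ne j l with rfl | hjl
        · exact absurd rfl hne
        · left
          rw [norm_eq_sqrt_inner']
          congr 1
          have h1 : j ≠ i := hij.ne'
          have h2 : i ≠ l := hkl.ne
          simp only [inner_sub_left, inner_sub_right, inner_add_left, inner_add_right, inn_ss]
          simp [hjl, hjl.symm, h1, h1.symm, h2, h2.symm]
          norm_num
      · rcases eq_or_ne i l with rfl | hil
        · left
          rw [norm_eq_sqrt_inner']
          congr 1
          have h1 : j ≠ k := (hkl.trans hij).ne'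
          have h2 : j ≠ i := hij.ne'
          simp only [inner_sub_left, inner_sub_right, inner_add_left, inner_add_right, inn_ss]
          simp [hik, hik.symm, h1, h1.symm, h2, h2.symm]
          norm_num
        · rcases eq_or_ne j k with rfl | hjk
          · left
            rw [norm_eq_sqrt_inner']
            congr 1
            have h1 : i ≠ l := (hij.trans hkl).ne
            have h2 : j ≠ l := hkl.ne
            simp only [inner_sub_left, inner_sub_right, inner_add_left, inner_add_right, inn_ss]
            simp [hik, hik.symm, h1, h1.symm, h2, h2.symm, hij.ne, hij.ne']
            norm_num
          · rcases eq_or_ne j l with rfl | hjl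
            · left
              rw [norm_eq_sqrt_inner']
              congr 1
              have h1 : k ≠ j := hkl.ne
              simp only [inner_sub_left, inner_sub_right, inner_add_left, inner_add_right, inn_ss]
              simp [hik, hik.symm, hjk, hjk.symm, h1, h1.symm, hij.ne, hij.ne']
              norm_num
            · right
              rw [norm_eq_sqrt_inner']
              apply sqrt_eq_two'
              simp only [inner_sub_left, inner_sub_right, inner_add_left, inner_add_right, inn_ss]
              simp [hik, hik.symm, hil, hil.symm, hjk, hjk.symm, hjl, hjl.symm,
                hij.ne, hij.ne', hkl.ne, hkl.ne']
              norm_num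
  · refine ⟨EuclideanSpace.single 0 1 + EuclideanSpace.single 1 1,
      Or.inr ⟨0, 1, by decide, rfl⟩,
      EuclideanSpace.single 0 1 + EuclideanSpace.single 2 1,
      Or.inr ⟨0, 2, by decide, rfl⟩, ?_⟩
    rw [norm_eq_sqrt_inner']
    congr 1
    simp only [inner_sub_left, inner_sub_right, inner_add_left, inner_add_right, inn_ss]
    norm_num [show (2:Fin 9) ≠ 1 by decide, show (1:Fin 9) ≠ 2 by decide]
  · refine ⟨EuclideanSpace.single 0 1 + EuclideanSpace.single 1 1,
      Or.inr ⟨0, 1, by decide, rfl⟩,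
      EuclideanSpace.single 2 1 + EuclideanSpace.single 3 1,
      Or.inr ⟨2, 3, by decide, rfl⟩, ?_⟩
    rw [norm_eq_sqrt_inner']
    apply sqrt_eq_two'
    simp only [inner_sub_left, inner_sub_right, inner_add_left, inner_add_right, inn_ss]
    norm_num [show (2:Fin 9) ≠ 0 by decide, show (0:Fin 9) ≠ 2 by decide,
      show (3:Fin 9) ≠ 0 by decide, show (0:Fin 9) ≠ 3 by decide,
      show (2:Fin 9) ≠ 1 by decide, show (1:Fin 9) ≠ 2 by decide,
      show (3:Fin 9) ≠ 1 by decide, show (1:Fin 9) ≠ 3 by decide,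
      show (3:Fin 9) ≠ 2 by decide, show (2:Fin 9) ≠ 3 by decide]
end
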